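/- If a linear measurement map A from Hermitian n×n matrices to R^m satisfies the Frobenius-robust rank null space property with respect to the ℓ_q norm of order r with constants 0 < ρ < 1 and τ > 0 (i.e., for every Hermitian M, ‖M_r‖_F ≤ (ρ/√r)‖M_{r,c}‖_* + τ‖A(M)‖_{ℓ_q}, where M_r collects the r largest singular values and M_{r,c} the remaining ones), then for every Hermitian X of rank at most r and every Hermitian Z with A(Z) = A(X) and ‖Z‖_* ≤ ‖X‖_*, we have Z = X. (Exact recovery of rank-r matrices by nuclear norm minimization in the noiseless case.) -/

import Mathlib

open scoped BigOperators
open MeasureTheory Matrix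
open scoped ComplexOrder

noncomputable section

namespace RT

instance {n m : ℕ} : MeasurableSpace (Matrix (Fin n) (Fin m) ℝ) :=
  inferInstanceAs (MeasurableSpace (Fin n → Fin m → ℝ))

/-- the values of a real tuple sorted in nonincreasing order -/
def sortDesc {n : ℕ} (f : Fin n → ℝ) : Fin n → ℝ :=
  fun i => - ((fun j => - f j) ∘ (Tuple.sort (fun j => - f j))) i

/-- singular values of a square complex matrix, in nonincreasing order -/
def singVals {n : ℕ} (M : Matrix (Fin n) (Fin n) ℂ) : Fin n → ℝ :=
  sortDesc (fun i =>
    Real.sqrt ((Matrix.isHermitian_conjTranspose_mul_self M).eigenvalues i))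

/-- `‖M_r‖_F`: Frobenius norm of the `r` largest singular values -/
def headFro {n : ℕ} (M : Matrix (Fin n) (Fin n) ℂ) (r : ℕ) : ℝ :=
  Real.sqrt (∑ i : Fin n, if (i : ℕ) < r then (singVals M i) ^ 2 else 0)

/-- `‖M_{r,c}‖_F`: Frobenius norm of the tail singular values -/
def tailFro {n : ℕ} (M : Matrix (Fin n) (Fin n) ℂ) (r : ℕ) : ℝ :=
  Real.sqrt (∑ i : Fin n, if r ≤ (i : ℕ) then (singVals M i) ^ 2 else 0)

/-- `‖M_r‖_*`: sum of the `r` largest singular values -/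
def headNuc {n : ℕ} (M : Matrix (Fin n) (Fin n) ℂ) (r : ℕ) : ℝ :=
  ∑ i : Fin n, if (i : ℕ) < r then singVals M i else 0

/-- `‖M_{r,c}‖_*`: sum of the singular values beyond the `r` largest -/
def tailNuc {n : ℕ} (M : Matrix (Fin n) (Fin n) ℂ) (r : ℕ) : ℝ :=
  ∑ i : Fin n, if r ≤ (i : ℕ) then singVals M i else 0

/-- nuclear norm -/
def nucNorm {n : ℕ} (M : Matrix (Fin n) (Fin n) ℂ) : ℝ :=
  ∑ i : Fin n, singVals M i

/-- Frobenius norm -/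
def froNorm {n : ℕ} (M : Matrix (Fin n) (Fin n) ℂ) : ℝ :=
  Real.sqrt (∑ i : Fin n, (singVals M i) ^ 2)

/-- `ℓ_q` norm on `ℝ^m` -/
def lqNorm {m : ℕ} (q : ℝ) (v : Fin m → ℝ) : ℝ :=
  (∑ j : Fin m, |v j| ^ q) ^ (1 / q)

/-- the Frobenius-robust rank null space property of order `r` with
constants `ρ`, `τ` with respect to `ℓ_q`, for a map on Hermitian matrices -/
def FrobRobustNSP {n m : ℕ} (A : Matrix (Fin n) (Fin n) ℂ → (Fin m → ℝ))
    (q : ℝ) (r : ℕ) (ρ τ : ℝ) : Prop :=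
  ∀ M : Matrix (Fin n) (Fin n) ℂ, M.IsHermitian →
    headFro M r ≤ (ρ / Real.sqrt r) * tailNuc M r + τ * lqNorm q (A M)

/-- rank one measurement map with real measurement vectors `a j`,
acting on complex Hermitian matrices: `X ↦ (tr(X a_j a_j^*))_j` -/
def measR {n m : ℕ} (a : Fin m → Fin n → ℝ) (X : Matrix (Fin n) (Fin n) ℂ) :
    Fin m → ℝ :=
  fun j => (Matrix.trace (X *
    Matrix.vecMulVec (fun k => (a j k : ℂ)) (fun k => (a j k : ℂ)))).re

/-- rank one measurement map with complex measurement vectors `a j`: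
`X ↦ (tr(X a_j a_j^*))_j` -/
def measC {n m : ℕ} (a : Fin m → Fin n → ℂ) (X : Matrix (Fin n) (Fin n) ℂ) :
    Fin m → ℝ :=
  fun j => (Matrix.trace (X * Matrix.vecMulVec (a j) (star (a j)))).re

/-- largest eigenvalue of a (Hermitian) matrix (junk value `0` otherwise) -/
def eigMax {𝕜 : Type*} [RCLike 𝕜] {n : ℕ} (M : Matrix (Fin n) (Fin n) 𝕜) : ℝ := by
  classical exact if h : M.IsHermitian then ⨆ i, h.eigenvalues i else 0

/-- smallest eigenvalue of a (Hermitian) matrix (junk value `0` otherwise) -/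
def eigMin {𝕜 : Type*} [RCLike 𝕜] {n : ℕ} (M : Matrix (Fin n) (Fin n) 𝕜) : ℝ := by
  classical exact if h : M.IsHermitian then ⨅ i, h.eigenvalues i else 0

/-- positive semidefinite square root (junk value `0` if not psd) -/
def psdSqrt {n : ℕ} (M : Matrix (Fin n) (Fin n) ℝ) : Matrix (Fin n) (Fin n) ℝ := by
  classical exact if h : M.PosSemidef then (h.1.eigenvectorUnitary.1 * diagonal ((↑) ∘ (√·) ∘ h.1.eigenvalues) *
    (star h.1.eigenvectorUnitary : Matrix (Fin n) (Fin n) ℝ)) else 0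

/-- the law of an `n × m` matrix with i.i.d. standard Gaussian entries -/
def gaussMatrix (n m : ℕ) : Measure (Matrix (Fin n) (Fin m) ℝ) :=
  Measure.pi fun _ : Fin n => Measure.pi fun _ : Fin m =>
    ProbabilityTheory.gaussianReal 0 1

/-- `μ` is the uniform (Haar) distribution on the Stiefel manifold `V_n^m`:
a probability measure carried by `{Q : Qᵀ Q = 1}` which is invariant under
left multiplication by orthogonal matrices. -/
def IsHaarStiefel {m n : ℕ} (μ : Measure (Matrix (Fin m) (Fin n) ℝ)) : Prop :=
  IsProbabilityMeasure μ ∧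
    μ {Q | Qᵀ * Q = 1} = 1 ∧
    ∀ O : Matrix (Fin m) (Fin m) ℝ, Oᵀ * O = 1 →
      Measure.map (fun Q => O * Q) μ = μ

end RT


instance (n m : ℕ) : MeasureTheory.IsProbabilityMeasure (RT.gaussMatrix n m) := by
  unfold RT.gaussMatrix
  exact MeasureTheory.Measure.pi.instIsProbabilityMeasure _

/-!
Put `M = Z - X`, so that `A M = 0`. The null space property then gives
`‖M_r‖_* ≤ √r ‖M_r‖_F ≤ ρ ‖M_{r,c}‖_*`. In the other direction `‖M_{r,c}‖_* ≤ ‖M_r‖_*`, by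
Lidskii's inequality `∑ᵢ |λᵢ(X) - λᵢ(-M)| ≤ ‖X + M‖_* = ‖Z‖_* ≤ ‖X‖_*` for decreasingly
ordered eigenvalues: since at most `r` of the `λᵢ(X)` are nonzero, its left side is at least
`‖X‖_* + ‖M‖_* - 2 ‖M_r‖_*`. As `ρ < 1`, both parts of `M` vanish.
Lidskii's inequality comes from Weyl's monotonicity `A ≤ B → λᵢ(A) ≤ λᵢ(B)`, applied to
`A ≤ E` and `B ≤ E` for `E = B + (A - B)⁺`.
-/

open Finset Module RCLike

namespace LinearMap.IsSymmetric

variable {𝕜 E : Type*} [RCLike 𝕜] [NormedAddCommGroup E] [InnerProductSpace 𝕜 E]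
  [FiniteDimensional 𝕜 E] {T S : E →ₗ[𝕜] E} {n : ℕ} (hn : finrank 𝕜 E = n)

local notation "⟪" x ", " y "⟫" => inner 𝕜 x y

theorem re_inner_apply_self_eq_sum (hT : T.IsSymmetric) (x : E) :
    re ⟪T x, x⟫ = ∑ j, hT.eigenvalues hn j * ‖(hT.eigenvectorBasis hn).repr x j‖ ^ 2 := by
  rw [← (hT.eigenvectorBasis hn).repr.inner_map_map, PiLp.inner_apply, map_sum]
  refine sum_congr rfl fun j _ => ?_
  rw [hT.eigenvectorBasis_apply_self_apply, ← smul_eq_mul, inner_smul_left, conj_ofReal,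
    inner_self_eq_norm_sq_to_K, re_ofReal_mul]
  norm_cast

theorem eigenvalues_mul_norm_sq_le_re_inner (hT : T.IsSymmetric) {i : Fin n} {x : E}
    (hx : ∀ j, i < j → (hT.eigenvectorBasis hn).repr x j = 0) :
    hT.eigenvalues hn i * ‖x‖ ^ 2 ≤ re ⟪T x, x⟫ := by
  rw [re_inner_apply_self_eq_sum, ← (hT.eigenvectorBasis hn).repr.norm_map,
    EuclideanSpace.norm_sq_eq, mul_sum]
  refine sum_le_sum fun j _ => ?_
  rcases le_or_gt j i with hji | hij
  · exact mul_le_mul_of_nonneg_right (hT.eigenvalues_antitone hn hji) (sq_nonneg _)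
  · simp [hx j hij]

theorem re_inner_le_eigenvalues_mul_norm_sq (hT : T.IsSymmetric) {i : Fin n} {x : E}
    (hx : ∀ j, j < i → (hT.eigenvectorBasis hn).repr x j = 0) :
    re ⟪T x, x⟫ ≤ hT.eigenvalues hn i * ‖x‖ ^ 2 := by
  rw [re_inner_apply_self_eq_sum, ← (hT.eigenvectorBasis hn).repr.norm_map,
    EuclideanSpace.norm_sq_eq, mul_sum]
  refine sum_le_sum fun j _ => ?_
  rcases le_or_gt i j with hij | hji
  · exact mul_le_mul_of_nonneg_right (hT.eigenvalues_antitone hn hij) (sq_nonneg _)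
  · simp [hx j hji]

theorem eigenvalues_le_of_isPositive_sub (hT : T.IsSymmetric) (hS : S.IsSymmetric)
    (hST : (S - T).IsPositive) (i : Fin n) : hT.eigenvalues hn i ≤ hS.eigenvalues hn i := by
  classical
  -- some `x ≠ 0` lies both in the span of the eigenvectors of `T` for `λ₀ ≥ ⋯ ≥ λᵢ` and in that of
  -- the eigenvectors of `S` for `λᵢ ≥ ⋯ ≥ λₙ₋₁`, as these dimensions add up to `n + 1`
  let Φ : E →ₗ[𝕜] ({j : Fin n // j ≠ i} → 𝕜) := LinearMap.pi fun j =>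
    if i < j.1 then (hT.eigenvectorBasis hn).toBasis.coord j
    else (hS.eigenvectorBasis hn).toBasis.coord j
  have hdim : finrank 𝕜 ({j : Fin n // j ≠ i} → 𝕜) < finrank 𝕜 E := by
    simp only [finrank_fintype_fun_eq_card, ne_eq, Fintype.card_subtype_compl,
      Fintype.card_fin, Fintype.card_unique, hn]
    have := i.pos
    omega
  obtain ⟨x, hxΦ, hx0⟩ := Submodule.exists_mem_ne_zero_of_ne_bot (ker_ne_bot_of_finrank_lt hdim)
  have hcoord (j : Fin n) (hj : j ≠ i) :
      (if i < j then (hT.eigenvectorBasis hn).repr x j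
        else (hS.eigenvectorBasis hn).repr x j) = 0 := by
    have : Φ x ⟨j, hj⟩ = 0 := congrFun (LinearMap.mem_ker.mp hxΦ) ⟨j, hj⟩
    simp only [Φ, LinearMap.pi_apply] at this
    split_ifs at this ⊢ <;> simpa [Module.Basis.coord_apply] using this
  have hTx := hT.eigenvalues_mul_norm_sq_le_re_inner hn (i := i) (x := x) fun j hj => by
    simpa only [if_pos hj] using hcoord j hj.ne'
  have hSx := hS.re_inner_le_eigenvalues_mul_norm_sq hn (i := i) (x := x) fun j hj => by
    simpa only [if_neg (lt_asymm hj)] using hcoord j hj.ne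
  have hTS : re ⟪T x, x⟫ ≤ re ⟪S x, x⟫ := by
    have := hST.2 x
    rw [sub_apply, inner_sub_left, map_sub] at this
    linarith
  exact le_of_mul_le_mul_right (hTx.trans (hTS.trans hSx)) (by positivity)

end LinearMap.IsSymmetric

namespace Matrix.IsHermitian

open scoped MatrixOrder

variable {𝕜 n : Type*} [RCLike 𝕜] [Fintype n] [DecidableEq n] {A B : Matrix n n 𝕜}

-- `eigenvalues` are the decreasing `eigenvalues₀` transported along a bijection
-- `Fin (card n) ≃ n` that does not depend on the matrix, so they can be compared index by index.
theorem eigenvalues_le_of_le (hA : A.IsHermitian) (hB : B.IsHermitian) (hAB : A ≤ B) (i : n) :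
    hA.eigenvalues i ≤ hB.eigenvalues i :=
  LinearMap.IsSymmetric.eigenvalues_le_of_isPositive_sub _ _ _
    (by rwa [← map_sub, isPositive_toEuclideanLin_iff]) _

theorem re_trace_eq_sum_eigenvalues (hA : A.IsHermitian) :
    re A.trace = ∑ i, hA.eigenvalues i := by
  simp [hA.trace_eq_sum_eigenvalues]

theorem re_trace_cfc (hA : A.IsHermitian) (f : ℝ → ℝ) :
    re (cfc f A).trace = ∑ i, f (hA.eigenvalues i) := by
  rw [hA.cfc_eq, IsHermitian.cfc, Unitary.conjStarAlgAut_apply, trace_mul_cycle,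
    Unitary.coe_star_mul_self, one_mul, trace_diagonal]
  simp

theorem map_eigenvalues_of_eq_cfc (hA : A.IsHermitian) {f : ℝ → ℝ} (hB : B.IsHermitian)
    (hBA : B = cfc f A) : univ.val.map hB.eigenvalues = univ.val.map (f ∘ hA.eigenvalues) := by
  subst hBA
  have h := congrArg Polynomial.roots (hA.charpoly_cfc_eq f)
  rw [hB.roots_charpoly_eq_eigenvalues, Polynomial.roots_prod _ _
    (prod_ne_zero_iff.mpr fun i _ => Polynomial.X_sub_C_ne_zero _)] at h
  simp only [Polynomial.roots_X_sub_C, Multiset.bind_singleton] at h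
  rw [← Multiset.map_map, show (fun i => ((f (hA.eigenvalues i) : ℝ) : 𝕜)) =
    ofReal ∘ f ∘ hA.eigenvalues from rfl, ← Multiset.map_map] at h
  exact Multiset.map_injective ofReal_injective h

theorem sum_abs_sub_eigenvalues_le (hA : A.IsHermitian) (hB : B.IsHermitian) :
    ∑ i, |hA.eigenvalues i - hB.eigenvalues i| ≤ ∑ i, |(hA.sub hB).eigenvalues i| := by
  set C := A - B
  have hC : C.IsHermitian := hA.sub hB
  -- `E = B + C⁺` dominates both `A = B + C⁺ - C⁻` and `B`
  set E := B + cfc (fun x : ℝ => max x 0) C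
  have hE : E.IsHermitian := hB.add (cfc_predicate _ _)
  have hEB : E - B = cfc (fun x : ℝ => max x 0) C := add_sub_cancel_left _ _
  have hEA : E - A = cfc (fun x : ℝ => max x 0 - x) C := by
    rw [cfc_sub .., cfc_id' ..]
    simp only [E, C]
    abel
  have hAE : A ≤ E := by
    rw [Matrix.le_iff, ← Matrix.nonneg_iff_posSemidef, hEA]
    exact cfc_nonneg fun x _ => sub_nonneg.mpr (le_max_left _ _)
  have hBE : B ≤ E := by
    rw [Matrix.le_iff, ← Matrix.nonneg_iff_posSemidef, hEB]
    exact cfc_nonneg fun x _ => le_max_right _ _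
  have hsum_sub {F G : Matrix n n 𝕜} (hF : F.IsHermitian) (hG : G.IsHermitian) :
      ∑ i, (hF.eigenvalues i - hG.eigenvalues i) = re (F - G).trace := by
    rw [sum_sub_distrib, trace_sub, map_sub, hF.re_trace_eq_sum_eigenvalues,
      hG.re_trace_eq_sum_eigenvalues]
  calc ∑ i, |hA.eigenvalues i - hB.eigenvalues i|
      ≤ ∑ i, ((hE.eigenvalues i - hA.eigenvalues i) +
          (hE.eigenvalues i - hB.eigenvalues i)) := by
        refine sum_le_sum fun i _ => abs_sub_le_iff.mpr ⟨?_, ?_⟩ <;>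
          linarith [eigenvalues_le_of_le hA hE hAE i, eigenvalues_le_of_le hB hE hBE i]
    _ = ∑ i, ((max (hC.eigenvalues i) 0 - hC.eigenvalues i) + max (hC.eigenvalues i) 0) := by
        rw [sum_add_distrib, sum_add_distrib, hsum_sub hE hA, hsum_sub hE hB, hEA, hEB,
          hC.re_trace_cfc, hC.re_trace_cfc]
    _ = ∑ i, |(hA.sub hB).eigenvalues i| := by
        refine sum_congr rfl fun i _ => ?_
        rcases le_total (hC.eigenvalues i) 0 with h | h
        · rw [max_eq_right h, abs_of_nonpos h]; ring
        · rw [max_eq_left h, abs_of_nonneg h]; ring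

end Matrix.IsHermitian

theorem Monotone.eq_of_map_univ_val_eq {α : Type*} [LinearOrder α] {n : ℕ} {u v : Fin n → α}
    (hu : Monotone u) (hv : Monotone v) (h : univ.val.map u = univ.val.map v) : u = v := by
  rw [Fin.univ_val_map, Fin.univ_val_map] at h
  exact List.ofFn_injective ((Quotient.exact h).eq_of_sortedLE hu.sortedLE_ofFn hv.sortedLE_ofFn)

theorem Antitone.sum_le_sum_val_lt_card {n : ℕ} {v : Fin n → ℝ} (hv : Antitone v)
    (T : Finset (Fin n)) :
    ∑ i ∈ T, v i ≤ ∑ i ∈ univ.filter (fun i : Fin n => (i : ℕ) < #T), v i := by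
  induction T using Finset.induction_on_max with
  | empty => simp
  | insert a T hlt ih =>
    have ha : a ∉ T := fun h => lt_irrefl a (hlt a h)
    have hTa : #T ≤ a := by
      simpa using card_le_card (fun x hx => mem_Iio.mpr (hlt x hx) : T ⊆ Iio a)
    have hsplit : univ.filter (fun i : Fin n => (i : ℕ) < #(insert a T)) =
        insert ⟨#T, by omega⟩ (univ.filter fun i : Fin n => (i : ℕ) < #T) := by
      ext i
      simp [card_insert_of_notMem ha, Fin.ext_iff]
      omega
    rw [sum_insert ha, hsplit, sum_insert (by simp)]
    exact add_le_add (hv (Fin.mk_le_of_le_val hTa)) ih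

theorem Finset.sum_abs_add_sum_abs_le {ι : Type*} [Fintype ι] (f g : ι → ℝ) {S : Finset ι}
    (hf : ∀ i ∉ S, f i = 0) :
    ∑ i, |f i| + ∑ i, |g i| ≤ ∑ i, |f i - g i| + 2 * ∑ i ∈ S, |g i| := by
  classical
  have hpt (i : ι) : |f i| + |g i| ≤ |f i - g i| + if i ∈ S then 2 * |g i| else 0 := by
    split_ifs with hi
    · linarith [abs_sub_abs_le_abs_sub (f i) (g i)]
    · simp [hf i hi]
  calc ∑ i, |f i| + ∑ i, |g i| = ∑ i, (|f i| + |g i|) := sum_add_distrib.symm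
    _ ≤ ∑ i, (|f i - g i| + if i ∈ S then 2 * |g i| else 0) := sum_le_sum fun i _ => hpt i
    _ = ∑ i, |f i - g i| + 2 * ∑ i ∈ S, |g i| := by
      rw [sum_add_distrib, sum_ite_mem, univ_inter, mul_sum]

namespace RT

variable {n : ℕ}

theorem sortDesc_eq_comp (f : Fin n → ℝ) : sortDesc f = f ∘ Tuple.sort (fun j => -f j) := by
  funext i
  simp [sortDesc]

theorem antitone_sortDesc (f : Fin n → ℝ) : Antitone (sortDesc f) := fun i j hij => by
  simpa [sortDesc] using Tuple.monotone_sort (fun j => -f j) hij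

theorem sum_comp_sortDesc (f : Fin n → ℝ) (φ : ℝ → ℝ) :
    ∑ i, φ (sortDesc f i) = ∑ i, φ (f i) := by
  rw [sortDesc_eq_comp]
  exact Equiv.sum_comp (Tuple.sort _) (fun i => φ (f i))

theorem sortDesc_congr {f g : Fin n → ℝ} (h : univ.val.map f = univ.val.map g) :
    sortDesc f = sortDesc g := by
  have hmap (u : Fin n → ℝ) : univ.val.map ((fun j => -u j) ∘ Tuple.sort (fun j => -u j)) =
      (univ.val.map u).map Neg.neg := by
    rw [← Multiset.map_map, Multiset.map_univ_val_equiv, Multiset.map_map]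
    rfl
  have := (Tuple.monotone_sort (fun j => -f j)).eq_of_map_univ_val_eq
    (Tuple.monotone_sort (fun j => -g j)) (by rw [hmap, hmap, h])
  funext i
  simp only [sortDesc, this]

theorem sum_le_sum_sortDesc_of_card_le {w : Fin n → ℝ} (hw : ∀ i, 0 ≤ w i)
    {S : Finset (Fin n)} {r : ℕ} (hS : #S ≤ r) :
    ∑ i ∈ S, w i ≤ ∑ i : Fin n, if (i : ℕ) < r then sortDesc w i else 0 := by
  set σ := Tuple.sort (fun j => -w j)
  have hS' : ∑ i ∈ S, w i = ∑ i ∈ S.map σ.symm.toEmbedding, sortDesc w i := by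
    simp [sortDesc_eq_comp, σ]
  rw [hS', ← sum_filter]
  refine (antitone_sortDesc w).sum_le_sum_val_lt_card _ |>.trans ?_
  refine sum_le_sum_of_subset_of_nonneg (fun i => ?_) fun i _ _ => ?_
  · simp only [card_map, mem_filter, mem_univ, true_and]
    omega
  · rw [sortDesc_eq_comp]
    exact hw _

theorem singVals_nonneg (M : Matrix (Fin n) (Fin n) ℂ) (i : Fin n) : 0 ≤ singVals M i := by
  rw [singVals, sortDesc_eq_comp]
  exact Real.sqrt_nonneg _

theorem singVals_neg (M : Matrix (Fin n) (Fin n) ℂ) : singVals (-M) = singVals M := by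
  unfold singVals
  rw [((isHermitian_conjTranspose_mul_self (-M)).eigenvalues_eq_eigenvalues_iff
    (isHermitian_conjTranspose_mul_self M)).mpr (by simp)]

theorem singVals_eq_sortDesc_abs {M : Matrix (Fin n) (Fin n) ℂ} (hM : M.IsHermitian) :
    singVals M = sortDesc fun i => |hM.eigenvalues i| := by
  have hsq := hM.map_eigenvalues_of_eq_cfc (f := (· ^ 2)) (isHermitian_conjTranspose_mul_self M)
    (by rw [cfc_pow_id M 2 hM.isSelfAdjoint, hM.eq, sq])
  refine sortDesc_congr ?_
  calc univ.val.map (fun i => √((isHermitian_conjTranspose_mul_self M).eigenvalues i))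
      = (univ.val.map (isHermitian_conjTranspose_mul_self M).eigenvalues).map Real.sqrt :=
        (Multiset.map_map _ _ _).symm
    _ = univ.val.map fun i => |hM.eigenvalues i| := by
        simp [hsq, Function.comp_def, Real.sqrt_sq_eq_abs]

theorem nucNorm_eq_sum_abs_eigenvalues {M : Matrix (Fin n) (Fin n) ℂ} (hM : M.IsHermitian) :
    nucNorm M = ∑ i, |hM.eigenvalues i| := by
  rw [nucNorm, singVals_eq_sortDesc_abs hM]
  exact sum_comp_sortDesc _ id

theorem eq_zero_of_nucNorm_eq_zero {M : Matrix (Fin n) (Fin n) ℂ} (hM : M.IsHermitian)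
    (h : nucNorm M = 0) : M = 0 := by
  rw [nucNorm_eq_sum_abs_eigenvalues hM, sum_eq_zero_iff_of_nonneg fun i _ => abs_nonneg _] at h
  exact hM.eigenvalues_eq_zero_iff.mp (funext fun i => abs_eq_zero.mp (h i (mem_univ i)))

theorem headNuc_add_tailNuc (M : Matrix (Fin n) (Fin n) ℂ) (r : ℕ) :
    headNuc M r + tailNuc M r = nucNorm M := by
  rw [headNuc, tailNuc, nucNorm, ← sum_add_distrib]
  refine sum_congr rfl fun i _ => ?_
  by_cases h : (i : ℕ) < r
  · simp [h, not_le.mpr h]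
  · simp [h, not_lt.mp h]

theorem headNuc_nonneg (M : Matrix (Fin n) (Fin n) ℂ) (r : ℕ) : 0 ≤ headNuc M r :=
  sum_nonneg fun i _ => by split_ifs <;> simp [singVals_nonneg]

theorem tailNuc_nonneg (M : Matrix (Fin n) (Fin n) ℂ) (r : ℕ) : 0 ≤ tailNuc M r :=
  sum_nonneg fun i _ => by split_ifs <;> simp [singVals_nonneg]

theorem headNuc_le_sqrt_mul_headFro (M : Matrix (Fin n) (Fin n) ℂ) (r : ℕ) :
    headNuc M r ≤ √r * headFro M r := by
  have hcs :=
    Real.sum_mul_le_sqrt_mul_sqrt (univ.filter fun i : Fin n => (i : ℕ) < r) 1 (singVals M)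
  have hcard : ((univ.filter fun i : Fin n => (i : ℕ) < r).card : ℝ) ≤ r :=
    mod_cast (Fin.card_filter_val_lt).trans_le (min_le_right _ _)
  simp only [Pi.one_apply, one_mul, one_pow, sum_const, nsmul_eq_mul, mul_one] at hcs
  rw [headNuc, headFro, ← sum_filter, ← sum_filter]
  exact hcs.trans (mul_le_mul_of_nonneg_right (Real.sqrt_le_sqrt hcard) (Real.sqrt_nonneg _))

theorem tailNuc_sub_le_headNuc_sub {X Z : Matrix (Fin n) (Fin n) ℂ} (hX : X.IsHermitian)
    (hZ : Z.IsHermitian) {r : ℕ} (hrank : X.rank ≤ r) (hnuc : nucNorm Z ≤ nucNorm X) :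
    tailNuc (Z - X) r ≤ headNuc (Z - X) r := by
  have hN : (X - Z).IsHermitian := hX.sub hZ
  have hsv : singVals (Z - X) = singVals (X - Z) := by rw [← neg_sub, singVals_neg]
  have hLidskii : ∑ i, |hX.eigenvalues i - hN.eigenvalues i| ≤ nucNorm Z :=
    calc ∑ i, |hX.eigenvalues i - hN.eigenvalues i|
        ≤ ∑ i, |(hX.sub hN).eigenvalues i| := hX.sum_abs_sub_eigenvalues_le hN
      _ = nucNorm Z := by rw [← nucNorm_eq_sum_abs_eigenvalues, sub_sub_cancel]
  set S := univ.filter fun i => hX.eigenvalues i ≠ 0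
  have hS : #S ≤ r := by
    rwa [← Fintype.card_subtype, ← hX.rank_eq_card_non_zero_eigs]
  have hhead : ∑ i ∈ S, |hN.eigenvalues i| ≤ headNuc (Z - X) r := by
    rw [headNuc, hsv, singVals_eq_sortDesc_abs hN]
    exact sum_le_sum_sortDesc_of_card_le (fun i => abs_nonneg _) hS
  have hsum := sum_abs_add_sum_abs_le hX.eigenvalues hN.eigenvalues (S := S) fun i hi => by
    simpa [S] using hi
  rw [← nucNorm_eq_sum_abs_eigenvalues hX, ← nucNorm_eq_sum_abs_eigenvalues hN] at hsum
  have hsplit : nucNorm (X - Z) = headNuc (Z - X) r + tailNuc (Z - X) r := by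
    rw [headNuc_add_tailNuc, nucNorm, nucNorm, hsv]
  linarith

theorem lqNorm_zero {m : ℕ} {q : ℝ} (hq : q ≠ 0) : lqNorm q (0 : Fin m → ℝ) = 0 := by
  simp [lqNorm, Real.zero_rpow hq, hq]

theorem FrobRobustNSP.headNuc_le {m : ℕ} {A : Matrix (Fin n) (Fin n) ℂ → (Fin m → ℝ)}
    {q ρ τ : ℝ} {r : ℕ} (hNSP : FrobRobustNSP A q r ρ τ) (hq : q ≠ 0) (hρ : 0 ≤ ρ)
    {M : Matrix (Fin n) (Fin n) ℂ} (hM : M.IsHermitian) (hAM : A M = 0) :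
    headNuc M r ≤ ρ * tailNuc M r := by
  have hFro := hNSP M hM
  rw [hAM, lqNorm_zero hq, mul_zero, add_zero] at hFro
  calc headNuc M r ≤ √r * headFro M r := headNuc_le_sqrt_mul_headFro M r
    _ ≤ √r * (ρ / √r * tailNuc M r) := mul_le_mul_of_nonneg_left hFro (Real.sqrt_nonneg _)
    _ ≤ ρ * tailNuc M r := by
      rcases eq_or_ne (√r) 0 with h | h
      · simp [h, mul_nonneg hρ (tailNuc_nonneg M r)]
      · rw [← mul_assoc, mul_div_cancel₀ _ h]

theorem eq_zero_of_headNuc_le {M : Matrix (Fin n) (Fin n) ℂ} (hM : M.IsHermitian) {r : ℕ}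
    {ρ : ℝ} (hρ0 : 0 ≤ ρ) (hρ1 : ρ < 1) (hhead : headNuc M r ≤ ρ * tailNuc M r)
    (htail : tailNuc M r ≤ headNuc M r) : M = 0 := by
  have h0 : headNuc M r = 0 := by
    nlinarith [headNuc_nonneg M r, tailNuc_nonneg M r]
  refine eq_zero_of_nucNorm_eq_zero hM ?_
  linarith [headNuc_add_tailNuc M r, tailNuc_nonneg M r]

end RT

theorem stmt0_general {n m : ℕ} (q : ℝ) (hq : 1 ≤ q) (r : ℕ)
    (A : Matrix (Fin n) (Fin n) ℂ → (Fin m → ℝ))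
    (hadd : ∀ X Y, A (X + Y) = A X + A Y)
    (ρ τ : ℝ) (hρ0 : 0 < ρ) (hρ1 : ρ < 1)
    (hNSP : RT.FrobRobustNSP A q r ρ τ)
    (X Z : Matrix (Fin n) (Fin n) ℂ) (hX : X.IsHermitian) (hZ : Z.IsHermitian)
    (hrank : X.rank ≤ r) (hAZ : A Z = A X) (hnuc : RT.nucNorm Z ≤ RT.nucNorm X) :
    Z = X := by
  have hAM : A (Z - X) = 0 := by
    simpa [hAZ] using hadd X (Z - X)
  refine sub_eq_zero.mp (RT.eq_zero_of_headNuc_le (hZ.sub hX) hρ0.le hρ1 ?_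
    (RT.tailNuc_sub_le_headNuc_sub hX hZ hrank hnuc))
  exact hNSP.headNuc_le (by linarith) hρ0.le (hZ.sub hX) hAM

theorem stmt0 {n m : ℕ} (q : ℝ) (hq : 1 ≤ q) (r : ℕ)
    (A : Matrix (Fin n) (Fin n) ℂ → (Fin m → ℝ))
    (hadd : ∀ X Y, A (X + Y) = A X + A Y)
    (hsmul : ∀ (c : ℝ) (X), A (c • X) = c • A X)
    (ρ τ : ℝ) (hρ0 : 0 < ρ) (hρ1 : ρ < 1) (hτ : 0 < τ)
    (hNSP : RT.FrobRobustNSP A q r ρ τ)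
    (X Z : Matrix (Fin n) (Fin n) ℂ) (hX : X.IsHermitian) (hZ : Z.IsHermitian)
    (hrank : X.rank ≤ r) (hAZ : A Z = A X) (hnuc : RT.nucNorm Z ≤ RT.nucNorm X) :
    Z = X :=
  stmt0_general q hq r A hadd ρ τ hρ0 hρ1 hNSP X Z hX hZ hrank hAZ hnuc
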